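/- Let k be a field and n ≥ 1, and let F_n be the universal monic polynomial of degree n. Then the set of elements of k[Y₁,…,Yₙ][X] of the form g(X − Y₁, …, X − Yₙ), where g ranges over the symmetric polynomials in n variables over k, is exactly the k-subalgebra of k[Y₁,…,Yₙ][X] generated by the Hasse derivatives Δ^k F_n for 0 ≤ k ≤ n−1 (where Δ⁰ F_n = F_n). -/

import Mathlib

/-!
Taylor expansion gives `F(X + T) = ∏ᵢ (T + (X - Yᵢ))`, so comparing coefficients of `T^j` shows
`Δ^j F = e_{n-j}(X - Y₁, …, X - Yₙ)`. Hence the generators `Δ^j F`, `j < n`, are the images of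
`e₁, …, eₙ` under the algebra map `g ↦ g(X - Y₁, …, X - Yₙ)`; by the fundamental theorem of
symmetric polynomials these generate the symmetric subalgebra.
-/
open Polynomial

namespace Polynomial

theorem hasseDeriv_map {R S : Type*} [Semiring R] [Semiring S] (f : R →+* S) (j : ℕ) (p : R[X]) :
    hasseDeriv j (p.map f) = (hasseDeriv j p).map f := by
  ext m
  simp [hasseDeriv_coeff, coeff_map]

variable {R : Type*}

theorem coeff_taylor_X_map_C [CommSemiring R] (f : R[X]) (j : ℕ) :
    (taylor (X : R[X]) (f.map C)).coeff j = hasseDeriv j f := by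
  rw [taylor_coeff, hasseDeriv_map, eval_map, eval₂_C_X]

theorem hasseDeriv_prod_X_sub_C [CommRing R] {ι : Type*} [Fintype ι] (y : ι → R) {j : ℕ}
    (hj : j ≤ Fintype.card ι) :
    hasseDeriv j (∏ i, (X - C (y i))) =
      (Finset.univ.val.map fun i => X - C (y i)).esymm (Fintype.card ι - j) := by
  have hshift : taylor (X : R[X]) ((∏ i, (X - C (y i))).map C) =
      (Finset.univ.val.map fun i => X + C (X - C (y i))).prod := by
    rw [taylor_apply, Polynomial.map_prod, prod_comp, Finset.prod_map_val]
    refine Finset.prod_congr rfl fun i _ => ?_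
    simp only [Polynomial.map_sub, map_X, map_C, sub_comp, X_comp, C_comp, map_sub]
    ring
  rw [← coeff_taylor_X_map_C, hshift, Multiset.prod_X_add_C_coeff' _ _ (by simpa using hj)]
  rfl

end Polynomial

namespace MvPolynomial

theorem adjoin_range_esymm {σ R : Type*} [CommRing R] [Fintype σ] {n : ℕ}
    (hn : Fintype.card σ ≤ n) :
    Algebra.adjoin R (Set.range fun i : Fin n => esymm σ R (i + 1)) = symmetricSubalgebra σ R := by
  have hval : (symmetricSubalgebra σ R).val.comp (esymmAlgHom σ R n) =
      aeval fun i : Fin n => esymm σ R (i + 1) := by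
    ext
    simp [esymmAlgHom]
  rw [Algebra.adjoin_range_eq_range_aeval, ← hval, AlgHom.range_comp,
    (AlgHom.range_eq_top _).2 (esymmAlgHom_surjective R hn), Algebra.map_top, Subalgebra.range_val]

end MvPolynomial

theorem symm_in_X_sub_Y_eq_adjoin_hasseDeriv_universal_general {k : Type*} [Field k]
    (n : ℕ) :
    {p : Polynomial (MvPolynomial (Fin n) k) |
        ∃ g : MvPolynomial (Fin n) k, g.IsSymmetric ∧
          MvPolynomial.aeval
            (fun i : Fin n => Polynomial.X - Polynomial.C (MvPolynomial.X i)) g = p} =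
      (Algebra.adjoin k
        {q : Polynomial (MvPolynomial (Fin n) k) | ∃ j, j < n ∧
          q = Polynomial.hasseDeriv j
                (∏ i : Fin n, (Polynomial.X - Polynomial.C (MvPolynomial.X i)))} :
        Subalgebra k (Polynomial (MvPolynomial (Fin n) k))) := by
  set w : Fin n → (MvPolynomial (Fin n) k)[X] := fun i => X - C (MvPolynomial.X i)
  have hderiv (j : ℕ) (hj : j ≤ n) :
      hasseDeriv j (∏ i, w i) = MvPolynomial.aeval w (MvPolynomial.esymm (Fin n) k (n - j)) := by
    rw [hasseDeriv_prod_X_sub_C _ (by simpa using hj), Fintype.card_fin,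
      MvPolynomial.aeval_esymm_eq_multiset_esymm]
  have hgen : {q | ∃ j, j < n ∧ q = hasseDeriv j (∏ i, w i)} =
      MvPolynomial.aeval w '' Set.range fun i : Fin n => MvPolynomial.esymm (Fin n) k (i + 1) := by
    ext q
    constructor
    · rintro ⟨j, hj, rfl⟩
      refine ⟨_, ⟨⟨n - 1 - j, by omega⟩, rfl⟩, ?_⟩
      rw [hderiv j hj.le, show n - j = n - 1 - j + 1 by omega]
    · rintro ⟨_, ⟨⟨i, hi⟩, rfl⟩, rfl⟩
      refine ⟨n - 1 - i, by omega, ?_⟩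
      rw [hderiv _ (by omega), show n - (n - 1 - i) = i + 1 by omega]
  rw [hgen, ← AlgHom.map_adjoin, MvPolynomial.adjoin_range_esymm (Fintype.card_fin n).le]
  ext p
  simp [MvPolynomial.mem_symmetricSubalgebra]

/-- Let `k` be a field, `n ≥ 1`, and let `Fₙ = ∏ᵢ (X − Yᵢ)` be the universal
monic polynomial of degree `n` in `k[Y₁,…,Yₙ][X]`.  The set of elements of `k[Y₁,…,Yₙ][X]` of
the form `g(X − Y₁, …, X − Yₙ)` with `g` a symmetric polynomial in `n` variables over `k` is
exactly the `k`-subalgebra of `k[Y₁,…,Yₙ][X]` generated by the Hasse derivatives `Δ^j Fₙ`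
for `0 ≤ j ≤ n − 1` (with `Δ⁰ Fₙ = Fₙ`). -/
theorem symm_in_X_sub_Y_eq_adjoin_hasseDeriv_universal {k : Type*} [Field k]
    (n : ℕ) (hn : 1 ≤ n) :
    {p : Polynomial (MvPolynomial (Fin n) k) |
        ∃ g : MvPolynomial (Fin n) k, g.IsSymmetric ∧
          MvPolynomial.aeval
            (fun i : Fin n => Polynomial.X - Polynomial.C (MvPolynomial.X i)) g = p} =
      (Algebra.adjoin k
        {q : Polynomial (MvPolynomial (Fin n) k) | ∃ j, j < n ∧
          q = Polynomial.hasseDeriv j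
                (∏ i : Fin n, (Polynomial.X - Polynomial.C (MvPolynomial.X i)))} :
        Subalgebra k (Polynomial (MvPolynomial (Fin n) k))) :=
  symm_in_X_sub_Y_eq_adjoin_hasseDeriv_universal_general n
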